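/- For all natural numbers q ≥ 1, γ ≥ 1, β with β < 2^{q²}: α(2^{3q²} + γ·2^{q²} + β) ≤ α(2^{3q²} + β) + α(γ) + 1, where α(n) is the minimum size of a set family generating an ideal of exactly n elements. -/

import Mathlib

/-- The ideal generated by a finite family of finite sets: the union of their power sets. -/
def idealOf (𝒮 : Finset (Finset ℕ)) : Finset (Finset ℕ) :=
  𝒮.sup Finset.powerset

/-- `alpha n` is the minimum size of a family of finite sets whose generated ideal
has exactly `n` elements. -/
noncomputable def alpha (n : ℕ) : ℕ :=
  sInf {m | ∃ 𝒮 : Finset (Finset ℕ), 𝒮.card = m ∧ (idealOf 𝒮).card = n}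

open Finset

lemma mem_idealOf {𝒮 : Finset (Finset ℕ)} {T : Finset ℕ} :
    T ∈ idealOf 𝒮 ↔ ∃ S ∈ 𝒮, T ⊆ S := by
  simp [idealOf, Finset.mem_sup, Finset.mem_powerset]

lemma empty_mem_idealOf {𝒮 : Finset (Finset ℕ)} (h : 𝒮.Nonempty) : ∅ ∈ idealOf 𝒮 := by
  obtain ⟨S, hS⟩ := h
  exact mem_idealOf.2 ⟨S, hS, empty_subset S⟩

lemma alpha_exists (n : ℕ) :
    ∃ 𝒮 : Finset (Finset ℕ), 𝒮.card = alpha n ∧ (idealOf 𝒮).card = n := by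
  have hne : {m | ∃ 𝒮 : Finset (Finset ℕ), 𝒮.card = m ∧ (idealOf 𝒮).card = n}.Nonempty := by
    rcases Nat.eq_zero_or_pos n with rfl | hn
    · exact ⟨0, ∅, by simp [idealOf]⟩
    · refine ⟨_, insert ∅ ((Finset.range (n - 1)).image fun i => ({i} : Finset ℕ)), rfl, ?_⟩
      have hideal : idealOf (insert ∅ ((Finset.range (n - 1)).image fun i => ({i} : Finset ℕ)))
          = insert ∅ ((Finset.range (n - 1)).image fun i => ({i} : Finset ℕ)) := by
        ext T
        simp only [mem_idealOf, Finset.mem_insert, Finset.mem_image, Finset.mem_range]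
        constructor
        · rintro ⟨S, (rfl | ⟨i, hi, rfl⟩), hT⟩
          · exact Or.inl (Finset.subset_empty.1 hT)
          · rcases Finset.subset_singleton_iff.1 hT with rfl | rfl
            · exact Or.inl rfl
            · exact Or.inr ⟨i, hi, rfl⟩
        · rintro (rfl | ⟨i, hi, rfl⟩)
          · exact ⟨∅, Or.inl rfl, le_refl _⟩
          · exact ⟨{i}, Or.inr ⟨i, hi, rfl⟩, le_refl _⟩
      rw [hideal, Finset.card_insert_of_notMem, Finset.card_image_of_injective,
        Finset.card_range]
      · omega
      · intro a b hab
        simpa using hab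
      · simp
  have := Nat.sInf_mem hne
  obtain ⟨𝒮, h1, h2⟩ := this
  exact ⟨𝒮, h1, h2⟩

lemma alpha_le {𝒮 : Finset (Finset ℕ)} {n : ℕ} (h : (idealOf 𝒮).card = n) :
    alpha n ≤ 𝒮.card :=
  Nat.sInf_le ⟨𝒮, rfl, h⟩

lemma idealOf_map (f : ℕ ↪ ℕ) (𝒮 : Finset (Finset ℕ)) :
    idealOf (𝒮.image (Finset.map f)) = (idealOf 𝒮).image (Finset.map f) := by
  ext T
  simp only [mem_idealOf, Finset.mem_image]
  constructor
  · rintro ⟨S', ⟨S, hS, rfl⟩, hT⟩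
    obtain ⟨U, hU, rfl⟩ := Finset.subset_map_iff.1 hT
    exact ⟨U, ⟨S, hS, hU⟩, rfl⟩
  · rintro ⟨U, ⟨S, hS, hU⟩, rfl⟩
    exact ⟨S.map f, ⟨S, hS, rfl⟩, Finset.map_subset_map.2 hU⟩

lemma card_idealOf_map (f : ℕ ↪ ℕ) (𝒮 : Finset (Finset ℕ)) :
    (idealOf (𝒮.image (Finset.map f))).card = (idealOf 𝒮).card := by
  rw [idealOf_map, Finset.card_image_of_injective _ (Finset.map_injective f)]

def dblE : ℕ ↪ ℕ := ⟨fun x => 2 * x, fun a b h => by dsimp at h; omega⟩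
def dbloE : ℕ ↪ ℕ := ⟨fun x => 2 * x + 1, fun a b h => by dsimp at h; omega⟩
def dbl2E : ℕ ↪ ℕ := ⟨fun x => 2 * x + 2, fun a b h => by dsimp at h; omega⟩

/-- Splitting lemma. -/
lemma alpha_split (m k : ℕ) (hm : 1 ≤ m) (hk : 1 ≤ k) :
    alpha (m + k) ≤ alpha m + alpha (k + 1) := by
  obtain ⟨𝒮, hS1, hS2⟩ := alpha_exists m
  obtain ⟨𝒯, hT1, hT2⟩ := alpha_exists (k + 1)
  set 𝒮' := 𝒮.image (Finset.map dblE) with h𝒮'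
  set 𝒯' := 𝒯.image (Finset.map dbloE) with h𝒯'
  have hSne : 𝒮'.Nonempty := by
    rw [h𝒮', Finset.image_nonempty]
    rcases Finset.eq_empty_or_nonempty 𝒮 with rfl | h
    · simp [idealOf] at hS2; omega
    · exact h
  have hTne : 𝒯'.Nonempty := by
    rw [h𝒯', Finset.image_nonempty]
    rcases Finset.eq_empty_or_nonempty 𝒯 with rfl | h
    · simp [idealOf] at hT2
    · exact h
  have hinter : idealOf 𝒮' ∩ idealOf 𝒯' = {∅} := by
    ext T
    simp only [Finset.mem_inter, Finset.mem_singleton]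
    constructor
    · rintro ⟨h1, h2⟩
      obtain ⟨S, hS, hTS⟩ := mem_idealOf.1 h1
      obtain ⟨S2, hS2', hTS2⟩ := mem_idealOf.1 h2
      rw [h𝒮'] at hS; rw [h𝒯'] at hS2'
      obtain ⟨A, _, rfl⟩ := Finset.mem_image.1 hS
      obtain ⟨B, _, rfl⟩ := Finset.mem_image.1 hS2'
      rw [Finset.eq_empty_iff_forall_notMem]
      intro x hx
      have h1 := hTS hx
      have h2 := hTS2 hx
      simp only [Finset.mem_map, dblE, dbloE, Function.Embedding.coeFn_mk] at h1 h2
      obtain ⟨a, _, ha⟩ := h1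
      obtain ⟨b, _, hb⟩ := h2
      have ha' : 2 * a = x := ha
      have hb' : 2 * b + 1 = x := hb
      omega
    · rintro rfl
      exact ⟨empty_mem_idealOf hSne, empty_mem_idealOf hTne⟩
  have hcard : (idealOf (𝒮' ∪ 𝒯')).card = m + k := by
    have := Finset.card_union_add_card_inter (idealOf 𝒮') (idealOf 𝒯')
    have hu : idealOf (𝒮' ∪ 𝒯') = idealOf 𝒮' ∪ idealOf 𝒯' := by
      simp [idealOf, Finset.sup_union]
    have hs' : (idealOf 𝒮').card = m := by rw [h𝒮', card_idealOf_map, hS2]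
    have ht' : (idealOf 𝒯').card = k + 1 := by rw [h𝒯', card_idealOf_map, hT2]
    rw [hinter, hs', ht'] at this
    simp only [Finset.card_singleton] at this
    rw [hu]
    omega
  calc alpha (m + k) ≤ (𝒮' ∪ 𝒯').card := alpha_le hcard
    _ ≤ 𝒮'.card + 𝒯'.card := Finset.card_union_le _ _
    _ ≤ 𝒮.card + 𝒯.card := add_le_add Finset.card_image_le Finset.card_image_le
    _ = alpha m + alpha (k + 1) := by rw [hS1, hT1]

/-- Lifting-plus-one lemma. -/
lemma alpha_lift_succ (t k : ℕ) (hk : 1 ≤ k) :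
    alpha (k * 2 ^ t + 1) ≤ alpha k + 1 := by
  obtain ⟨ℬ, hB1, hB2⟩ := alpha_exists k
  set ℬ' := ℬ.image (Finset.map dbl2E) with hℬ'
  set F : Finset ℕ := (Finset.range t).map dbloE with hF
  set L := ℬ'.image (fun S => S ∪ F) with hL
  have hBne : ℬ'.Nonempty := by
    rw [hℬ', Finset.image_nonempty]
    rcases Finset.eq_empty_or_nonempty ℬ with rfl | h
    · simp [idealOf] at hB2; omega
    · exact h
  -- every member of ℬ' is disjoint from F and does not contain 0
  have hdisj : ∀ S ∈ ℬ', Disjoint S F := by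
    intro S hS
    rw [hℬ'] at hS
    obtain ⟨A, _, rfl⟩ := Finset.mem_image.1 hS
    rw [Finset.disjoint_left]
    intro x hx hxF
    simp only [Finset.mem_map, dbl2E, dbloE, Function.Embedding.coeFn_mk, hF,
      Finset.mem_range] at hx hxF
    obtain ⟨a, _, ha⟩ := hx
    obtain ⟨b, _, hb⟩ := hxF
    have ha' : 2 * a + 2 = x := ha
    have hb' : 2 * b + 1 = x := hb
    omega
  have hzero : ∀ S ∈ ℬ', (0 : ℕ) ∉ S ∪ F := by
    intro S hS hx
    rw [hℬ'] at hS
    obtain ⟨A, _, rfl⟩ := Finset.mem_image.1 hS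
    simp only [Finset.mem_union, Finset.mem_map, dbl2E, dbloE,
      Function.Embedding.coeFn_mk, hF, Finset.mem_range] at hx
    rcases hx with ⟨a, _, ha⟩ | ⟨b, _, hb⟩
    · have ha' : 2 * a + 2 = 0 := ha
      omega
    · have hb' : 2 * b + 1 = 0 := hb
      omega
  -- card of ideal of L
  have hLcard : (idealOf L).card = k * 2 ^ t := by
    have hFcard : F.card = t := by simp [hF]
    have hb' : (idealOf ℬ').card = k := by rw [hℬ', card_idealOf_map, hB2]
    have : ((idealOf ℬ') ×ˢ F.powerset).card = (idealOf L).card := by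
      refine Finset.card_bij' (fun p _ => p.1 ∪ p.2) (fun T _ => (T \ F, T ∩ F)) ?_ ?_ ?_ ?_
      · rintro ⟨U, G⟩ hp
        rw [Finset.mem_product] at hp
        obtain ⟨hU, hG⟩ := hp
        obtain ⟨S, hS, hUS⟩ := mem_idealOf.1 hU
        refine mem_idealOf.2 ⟨S ∪ F, ?_, ?_⟩
        · exact Finset.mem_image.2 ⟨S, hS, rfl⟩
        · exact Finset.union_subset_union hUS (Finset.mem_powerset.1 hG)
      · intro T hT
        obtain ⟨SF, hSF, hTSF⟩ := mem_idealOf.1 hT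
        rw [hL] at hSF
        obtain ⟨S, hS, rfl⟩ := Finset.mem_image.1 hSF
        rw [Finset.mem_product]
        constructor
        · refine mem_idealOf.2 ⟨S, hS, ?_⟩
          intro x hx
          rw [Finset.mem_sdiff] at hx
          rcases Finset.mem_union.1 (hTSF hx.1) with h | h
          · exact h
          · exact absurd h hx.2
        · exact Finset.mem_powerset.2 (Finset.inter_subset_right)
      · rintro ⟨U, G⟩ hp
        rw [Finset.mem_product] at hp
        obtain ⟨hU, hG⟩ := hp
        obtain ⟨S, hS, hUS⟩ := mem_idealOf.1 hU
        have hUF : Disjoint U F := Finset.disjoint_of_subset_left hUS (hdisj S hS)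
        have hGF : G ⊆ F := Finset.mem_powerset.1 hG
        have h1 : (U ∪ G) \ F = U := by
          rw [Finset.union_sdiff_distrib, Finset.sdiff_eq_self_of_disjoint hUF,
            Finset.sdiff_eq_empty_iff_subset.2 hGF, Finset.union_empty]
        have h2 : (U ∪ G) ∩ F = G := by
          rw [Finset.union_inter_distrib_right,
            (Finset.disjoint_iff_inter_eq_empty).1 hUF,
            Finset.inter_eq_left.2 hGF, Finset.empty_union]
        simp [h1, h2]
      · intro T hT
        exact Finset.sdiff_union_inter T F
    rw [← this, Finset.card_product, Finset.card_powerset, hFcard, hb']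
  -- the full family
  set 𝒰 := insert ({0} : Finset ℕ) L with h𝒰
  have hideal𝒰 : (idealOf 𝒰).card = k * 2 ^ t + 1 := by
    have hu : idealOf 𝒰 = ({0} : Finset ℕ).powerset ∪ idealOf L := by
      simp [idealOf, h𝒰, Finset.sup_insert]
    have hpow : ({0} : Finset ℕ).powerset = {∅, {0}} := by
      ext T
      simp [Finset.mem_powerset, Finset.subset_singleton_iff]
    have hempty : ∅ ∈ idealOf L := by
      obtain ⟨S, hS⟩ := hBne
      exact mem_idealOf.2 ⟨S ∪ F, Finset.mem_image.2 ⟨S, hS, rfl⟩, Finset.empty_subset _⟩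
    have hzeroL : ({0} : Finset ℕ) ∉ idealOf L := by
      intro h
      obtain ⟨SF, hSF, hsub⟩ := mem_idealOf.1 h
      rw [hL] at hSF
      obtain ⟨S, hS, rfl⟩ := Finset.mem_image.1 hSF
      exact hzero S hS (hsub (Finset.mem_singleton_self 0))
    have : idealOf 𝒰 = insert ({0} : Finset ℕ) (idealOf L) := by
      rw [hu, hpow]
      ext T
      simp only [Finset.mem_union, Finset.mem_insert, Finset.mem_singleton]
      constructor
      · rintro ((rfl | rfl) | h)
        · exact Or.inr hempty
        · exact Or.inl rfl
        · exact Or.inr h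
      · rintro (rfl | h)
        · exact Or.inl (Or.inr rfl)
        · exact Or.inr h
    rw [this, Finset.card_insert_of_notMem hzeroL, hLcard]
  calc alpha (k * 2 ^ t + 1) ≤ 𝒰.card := alpha_le hideal𝒰
    _ ≤ L.card + 1 := Finset.card_insert_le _ _
    _ ≤ ℬ'.card + 1 := Nat.add_le_add_right Finset.card_image_le 1
    _ ≤ ℬ.card + 1 := Nat.add_le_add_right Finset.card_image_le 1
    _ = alpha k + 1 := by rw [hB1]

/-- Handling the middle term of the decomposition. -/
theorem alpha_break_induction (q γ β : ℕ) (hq : 1 ≤ q) (hγ : 1 ≤ γ)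
    (hβ : β < 2 ^ (q ^ 2)) :
    alpha (2 ^ (3 * q ^ 2) + γ * 2 ^ (q ^ 2) + β) ≤
      alpha (2 ^ (3 * q ^ 2) + β) + alpha γ + 1 := by
  have hpow : 1 ≤ 2 ^ (q ^ 2) := Nat.one_le_two_pow
  have h1 : alpha (2 ^ (3 * q ^ 2) + γ * 2 ^ (q ^ 2) + β) ≤
      alpha (2 ^ (3 * q ^ 2) + β) + alpha (γ * 2 ^ (q ^ 2) + 1) := by
    have := alpha_split (2 ^ (3 * q ^ 2) + β) (γ * 2 ^ (q ^ 2))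
      (by have := Nat.one_le_two_pow (n := 3 * q ^ 2); omega) (by nlinarith)
    have heq : 2 ^ (3 * q ^ 2) + β + γ * 2 ^ (q ^ 2)
        = 2 ^ (3 * q ^ 2) + γ * 2 ^ (q ^ 2) + β := by ring
    rwa [heq] at this
  have h2 : alpha (γ * 2 ^ (q ^ 2) + 1) ≤ alpha γ + 1 := alpha_lift_succ (q ^ 2) γ hγ
  omega
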